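/- Let r ∈ (0,1) and ρ ∈ (r,1). Then 0 < K_r(r/ρ) − 1 ≤ 4r(1−ρ)/((ρ−r)(1−r)²), where K_r is the Villat kernel. -/
import Mathlib


open Complex Set

/-- The Villat kernel `K_r(z) = 1 + 2 ∑_{k≥1} (z^k − r^{2k} z^{−k})/(1 − r^{2k})`. -/
noncomputable def villatK (r : ℝ) (z : ℂ) : ℂ :=
  1 + 2 * ∑' k : ℕ,
    ((z ^ (k + 1) - (r : ℂ) ^ (2 * (k + 1)) * z⁻¹ ^ (k + 1)) /
      (1 - (r : ℂ) ^ (2 * (k + 1))))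

/-- For `r ∈ (0,1)` and `ρ ∈ (r,1)`, the value `K_r(r/ρ)` is real and satisfies
`0 < K_r(r/ρ) − 1 ≤ 4r(1−ρ)/((ρ−r)(1−r)²)`. -/
theorem villat_kernel_real_estimate
    (r ρ : ℝ) (hr : r ∈ Ioo (0:ℝ) 1) (hρ : ρ ∈ Ioo r 1) :
    (villatK r ((r / ρ : ℝ) : ℂ)).im = 0 ∧
    0 < (villatK r ((r / ρ : ℝ) : ℂ)).re - 1 ∧
    (villatK r ((r / ρ : ℝ) : ℂ)).re - 1 ≤
      4 * r * (1 - ρ) / ((ρ - r) * (1 - r) ^ 2) := by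
  obtain ⟨hr0, hr1⟩ := hr
  obtain ⟨hρr, hρ1⟩ := hρ
  have hρ0 : 0 < ρ := hr0.trans hρr
  set x : ℝ := r / ρ with hxdef
  set y : ℝ := r * ρ with hydef
  have hx0 : 0 < x := div_pos hr0 hρ0
  have hx1 : x < 1 := (div_lt_one hρ0).2 hρr
  have hy0 : 0 < y := mul_pos hr0 hρ0
  have hy1 : y < 1 := by nlinarith
  have hyx : y ≤ x := by
    rw [hxdef, hydef, le_div_iff₀ hρ0]; nlinarith
  have hr2 : (0:ℝ) < 1 - r ^ 2 := by nlinarith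
  -- the real form of each summand
  set f : ℕ → ℝ := fun k => (x ^ (k + 1) - y ^ (k + 1)) / (1 - (r ^ 2) ^ (k + 1)) with hfdef
  have hpowle : ∀ k : ℕ, (r ^ 2) ^ (k + 1) ≤ r ^ 2 := by
    intro k
    calc (r ^ 2) ^ (k + 1) ≤ (r ^ 2) ^ 1 :=
          pow_le_pow_of_le_one (by positivity) (by nlinarith) (by omega)
      _ = r ^ 2 := pow_one _
  have hden : ∀ k : ℕ, (0:ℝ) < 1 - (r ^ 2) ^ (k + 1) := fun k => by
    have := hpowle k; linarith
  have hnum : ∀ k : ℕ, 0 ≤ x ^ (k + 1) - y ^ (k + 1) := by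
    intro k
    have := pow_le_pow_left₀ hy0.le hyx (k + 1)
    linarith
  have hfnonneg : ∀ k, 0 ≤ f k := fun k => div_nonneg (hnum k) (hden k).le
  -- terms of the complex sum are real
  have hterm : ∀ k : ℕ,
      (((x:ℝ):ℂ) ^ (k + 1) - (r : ℂ) ^ (2 * (k + 1)) * ((x:ℝ):ℂ)⁻¹ ^ (k + 1)) /
        (1 - (r : ℂ) ^ (2 * (k + 1))) = ((f k : ℝ) : ℂ) := by
    intro k
    have hreal : f k = (x ^ (k + 1) - r ^ (2 * (k + 1)) * x⁻¹ ^ (k + 1)) /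
        (1 - r ^ (2 * (k + 1))) := by
      rw [hfdef]
      have h1 : r ^ (2 * (k + 1)) = (r ^ 2) ^ (k + 1) := by rw [← pow_mul]
      have h2 : r ^ (2 * (k + 1)) * x⁻¹ ^ (k + 1) = y ^ (k + 1) := by
        rw [h1, ← mul_pow]
        congr 1
        rw [hxdef, hydef]
        field_simp
      rw [h2, h1]
    rw [hreal]
    push_cast
    ring
  have hK : villatK r ((x : ℝ) : ℂ) = ((1 + 2 * ∑' k, f k : ℝ) : ℂ) := by
    unfold villatK
    rw [tsum_congr hterm, ← Complex.ofReal_tsum]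
    push_cast
    ring
  -- summability and bounds
  have hsx : Summable (fun k : ℕ => x ^ (k + 1)) := by
    simpa [pow_succ, mul_comm] using (summable_geometric_of_lt_one hx0.le hx1).mul_left x
  have hsy : Summable (fun k : ℕ => y ^ (k + 1)) := by
    simpa [pow_succ, mul_comm] using (summable_geometric_of_lt_one hy0.le hy1).mul_left y
  set g : ℕ → ℝ := fun k => (x ^ (k + 1) - y ^ (k + 1)) / (1 - r ^ 2) with hgdef
  have hsg : Summable g := by
    simpa [hgdef, div_eq_mul_inv, sub_mul] using ((hsx.sub hsy).mul_right (1 - r ^ 2)⁻¹)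
  have hfg : ∀ k, f k ≤ g k := by
    intro k
    exact div_le_div_of_nonneg_left (hnum k) hr2 (by have := hpowle k; linarith)
  have hsf : Summable f := Summable.of_nonneg_of_le hfnonneg hfg hsg
  have htsum_le : ∑' k, f k ≤ ∑' k, g k := Summable.tsum_le_tsum hfg hsf hsg
  have htsumg : ∑' k, g k = (x / (1 - x) - y / (1 - y)) / (1 - r ^ 2) := by
    have h1 : ∑' k : ℕ, x ^ (k + 1) = x / (1 - x) := by
      have : (fun k : ℕ => x ^ (k + 1)) = fun k : ℕ => x * x ^ k := by
        funext k; rw [pow_succ, mul_comm]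
      rw [this, tsum_mul_left, tsum_geometric_of_lt_one hx0.le hx1, div_eq_mul_inv]
    have h2 : ∑' k : ℕ, y ^ (k + 1) = y / (1 - y) := by
      have : (fun k : ℕ => y ^ (k + 1)) = fun k : ℕ => y * y ^ k := by
        funext k; rw [pow_succ, mul_comm]
      rw [this, tsum_mul_left, tsum_geometric_of_lt_one hy0.le hy1, div_eq_mul_inv]
    rw [hgdef]
    simp only [div_eq_mul_inv]
    rw [tsum_mul_right, Summable.tsum_sub hsx hsy, h1, h2]
    simp only [div_eq_mul_inv]
  have hfpos : 0 < f 0 := by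
    apply div_pos _ (hden 0)
    have : y ^ 1 < x ^ 1 := by
      simp only [pow_one]
      rw [hxdef, hydef, lt_div_iff₀ hρ0]
      nlinarith
    simpa using this
  have hpos : 0 < ∑' k, f k := Summable.tsum_pos hsf hfnonneg 0 hfpos
  -- the final algebraic bound
  have hbound : 2 * ((x / (1 - x) - y / (1 - y)) / (1 - r ^ 2)) ≤
      4 * r * (1 - ρ) / ((ρ - r) * (1 - r) ^ 2) := by
    have hρr' : 0 < ρ - r := by linarith
    have hy1' : 0 < 1 - r * ρ := by rw [hydef] at hy1; linarith
    have hlhs : 2 * ((x / (1 - x) - y / (1 - y)) / (1 - r ^ 2)) =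
        2 * r * (1 - ρ ^ 2) / ((ρ - r) * (1 - r * ρ) * (1 - r ^ 2)) := by
      rw [hxdef, hydef]
      have hx1' : (0:ℝ) < 1 - r / ρ := by
        rw [hxdef] at hx1; linarith
      field_simp
      ring
    have hd1 : (0:ℝ) < (ρ - r) * (1 - r * ρ) * (1 - r ^ 2) :=
      mul_pos (mul_pos hρr' hy1') hr2
    have hd2 : (0:ℝ) < (ρ - r) * (1 - r) ^ 2 := by
      apply mul_pos hρr'
      have : (0:ℝ) < 1 - r := by linarith
      positivity
    rw [hlhs, div_le_div_iff₀ hd1 hd2]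
    have hC : (0:ℝ) ≤ 2 * r * (1 - ρ) * (ρ - r) * (1 - r) := by
      have h1 : (0:ℝ) < 1 - ρ := by linarith
      have h2 : (0:ℝ) < 1 - r := by linarith
      positivity
    have hD : (0:ℝ) ≤ 2 * (1 - r * ρ) * (1 + r) - (1 + ρ) * (1 - r) := by nlinarith
    nlinarith [mul_nonneg hC hD]
  refine ⟨by simp [hK], ?_, ?_⟩
  · simp only [hK, Complex.ofReal_re]
    linarith
  · simp only [hK, Complex.ofReal_re]
    calc 1 + 2 * ∑' k, f k - 1 = 2 * ∑' k, f k := by ring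
      _ ≤ 2 * ((x / (1 - x) - y / (1 - y)) / (1 - r ^ 2)) := by
          rw [← htsumg]; linarith
      _ ≤ _ := hbound
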